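/- Let E be a Banach lattice whose dual E' has order continuous norm. Then every weak L-weakly compact subset of E is L-weakly compact. -/

import Mathlib

open Filter Topology Bornology

/-- A sequence in a normed lattice is unbounded-norm (un-) null if `‖ |xₙ| ⊓ u ‖ → 0`
for every positive `u`. -/
def UnNullSeq {G : Type*} [NormedAddCommGroup G] [Lattice G] [IsOrderedAddMonoid G] [HasSolidNorm G] (x : ℕ → G) : Prop :=
  ∀ u : G, 0 ≤ u → Tendsto (fun n => ‖|x n| ⊓ u‖) atTop (𝓝 0)

/-- A pairwise disjoint sequence. -/
def DisjointSeq {G : Type*} [NormedAddCommGroup G] [Lattice G] [IsOrderedAddMonoid G] [HasSolidNorm G] (x : ℕ → G) : Prop :=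
  Pairwise fun n m => |x n| ⊓ |x m| = 0

/-- A norm bounded sequence. -/
def NormBddSeq {G : Type*} [NormedAddCommGroup G] [Lattice G] [IsOrderedAddMonoid G] [HasSolidNorm G] (x : ℕ → G) : Prop :=
  ∃ C : ℝ, ∀ n, ‖x n‖ ≤ C

/-- The solid hull of a set. -/
def SolidHull {G : Type*} [NormedAddCommGroup G] [Lattice G] [IsOrderedAddMonoid G] [HasSolidNorm G] (A : Set G) : Set G :=
  {x | ∃ y ∈ A, |x| ≤ |y|}

/-- A bounded set is L-weakly compact if every disjoint sequence in its solid hull is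
norm null. -/
def LWCSet {G : Type*} [NormedAddCommGroup G] [Lattice G] [IsOrderedAddMonoid G] [HasSolidNorm G] (A : Set G) : Prop :=
  IsBounded A ∧ ∀ x : ℕ → G, (∀ n, x n ∈ SolidHull A) → DisjointSeq x →
    Tendsto (fun n => ‖x n‖) atTop (𝓝 0)

/-- The norm is order continuous: every net decreasing to `0` is norm null. -/
def OrderContNorm (G : Type*) [NormedAddCommGroup G] [Lattice G] [IsOrderedAddMonoid G] [HasSolidNorm G] : Prop :=
  ∀ (ι : Type) [SemilatticeSup ι] [Nonempty ι] (x : ι → G),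
    Antitone x → IsGLB (Set.range x) 0 → Tendsto (fun i => ‖x i‖) atTop (𝓝 0)

/-- Dedekind σ-completeness: every bounded-above increasing sequence has a supremum. -/
def DedekindSigmaComplete (G : Type*) [NormedAddCommGroup G] [Lattice G] [IsOrderedAddMonoid G] [HasSolidNorm G] : Prop :=
  ∀ x : ℕ → G, Monotone x → (∃ b, ∀ n, x n ≤ b) → ∃ s, IsLUB (Set.range x) s

/-- An atom of a Banach lattice. -/
def IsLatticeAtom {G : Type*} [NormedAddCommGroup G] [Lattice G] [IsOrderedAddMonoid G] [HasSolidNorm G] [NormedSpace ℝ G] (a : G) : Prop :=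
  0 < a ∧ ∀ x : G, 0 ≤ x → x ≤ a → ∃ c : ℝ, x = c • a

/-- An atomic Banach lattice: every nonzero positive element dominates an atom. -/
def AtomicLattice (G : Type*) [NormedAddCommGroup G] [Lattice G] [IsOrderedAddMonoid G] [HasSolidNorm G] [NormedSpace ℝ G] : Prop :=
  ∀ x : G, 0 < x → ∃ a, IsLatticeAtom a ∧ a ≤ x

/-- A realization of the Banach lattice `E'` as the topological dual of the Banach lattice
`E`: a linear isometric isomorphism onto `NormedSpace.Dual ℝ E` that identifies the order. -/
structure DualPairing (E E' : Type*) [NormedAddCommGroup E] [Lattice E] [IsOrderedAddMonoid E] [HasSolidNorm E] [NormedSpace ℝ E]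
    [NormedAddCommGroup E'] [Lattice E'] [IsOrderedAddMonoid E'] [HasSolidNorm E'] [NormedSpace ℝ E'] where
  toDual : E' ≃ₗᵢ[ℝ] StrongDual ℝ E
  pos_iff : ∀ f : E', 0 ≤ f ↔ ∀ x : E, 0 ≤ x → 0 ≤ toDual f x

section Pairing

variable {E E' : Type*} [NormedAddCommGroup E] [Lattice E] [IsOrderedAddMonoid E] [HasSolidNorm E] [NormedSpace ℝ E]
  [NormedAddCommGroup E'] [Lattice E'] [IsOrderedAddMonoid E'] [HasSolidNorm E'] [NormedSpace ℝ E']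

/-- A bounded set `A ⊆ E` is weak L-weakly compact if `sup_{x ∈ A} |x'ₙ(x)| → 0` for every
norm bounded un-null sequence `(x'ₙ)` in the dual `E'`. -/
def WeakLWCSet (P : DualPairing E E') (A : Set E) : Prop :=
  IsBounded A ∧ ∀ f : ℕ → E', NormBddSeq f → UnNullSeq f →
    Tendsto (fun n => ⨆ x ∈ A, |P.toDual (f n) x|) atTop (𝓝 0)

/-- A bounded set `B ⊆ E'` is weak* L-weakly compact if `sup_{x' ∈ B} |x'(xₙ)| → 0` for every
norm bounded un-null sequence `(xₙ)` in `E`. -/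
def WeakStarLWCSet (P : DualPairing E E') (B : Set E') : Prop :=
  IsBounded B ∧ ∀ x : ℕ → E, NormBddSeq x → UnNullSeq x →
    Tendsto (fun n => ⨆ f ∈ B, |P.toDual f (x n)|) atTop (𝓝 0)

end Pairing

section Op

variable {E F X : Type*} [NormedAddCommGroup E] [Lattice E] [IsOrderedAddMonoid E] [HasSolidNorm E] [NormedSpace ℝ E]
  [NormedAddCommGroup X] [NormedSpace ℝ X]

/-- `T : E → X` is M-weakly compact if `‖Txₙ‖ → 0` for every norm bounded disjoint
sequence in `E`. -/
def MWeaklyCompact (T : E →L[ℝ] X) : Prop :=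
  ∀ x : ℕ → E, NormBddSeq x → DisjointSeq x → Tendsto (fun n => ‖T (x n)‖) atTop (𝓝 0)

/-- `T : E → X` is weak M-weakly compact if `‖Txₙ‖ → 0` for every un-null sequence in the
closed unit ball of `E`. -/
def WeakMWeaklyCompact (T : E →L[ℝ] X) : Prop :=
  ∀ x : ℕ → E, (∀ n, ‖x n‖ ≤ 1) → UnNullSeq x → Tendsto (fun n => ‖T (x n)‖) atTop (𝓝 0)

/-- `T : X → E` is L-weakly compact if the image of the closed unit ball is an
L-weakly compact set. -/
def LWCOperator (T : X →L[ℝ] E) : Prop :=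
  LWCSet (T '' Metric.closedBall 0 1)

/-- `T : X → E` is weak L-weakly compact if `sup_{x ∈ B_X} |fₙ(Tx)| → 0` for every norm
bounded un-null sequence `(fₙ)` in `E'`. -/
def WeakLWCOperator {E' : Type*} [NormedAddCommGroup E'] [Lattice E'] [IsOrderedAddMonoid E'] [HasSolidNorm E'] [NormedSpace ℝ E']
    (P : DualPairing E E') (T : X →L[ℝ] E) : Prop :=
  ∀ f : ℕ → E', NormBddSeq f → UnNullSeq f →
    Tendsto (fun n => ⨆ x ∈ Metric.closedBall (0 : X) 1, |P.toDual (f n) (T x)|) atTop (𝓝 0)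

/-- `T : X → E'` is weak* L-weakly compact if its image of the unit ball is a weak*
L-weakly compact set. -/
def WeakStarLWCOperator {E' : Type*} [NormedAddCommGroup E'] [Lattice E'] [IsOrderedAddMonoid E'] [HasSolidNorm E'] [NormedSpace ℝ E']
    (P : DualPairing E E') (T : X →L[ℝ] E') : Prop :=
  ∀ x : ℕ → E, NormBddSeq x → UnNullSeq x →
    Tendsto (fun n => ⨆ y ∈ Metric.closedBall (0 : X) 1, |P.toDual (T y) (x n)|) atTop (𝓝 0)

/-- A positive operator. -/
def PositiveOp {F : Type*} [NormedAddCommGroup F] [Lattice F] [IsOrderedAddMonoid F] [HasSolidNorm F] [NormedSpace ℝ F] (T : E →L[ℝ] F) : Prop :=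
  ∀ x : E, 0 ≤ x → 0 ≤ T x

end Op

/-- Membership in `G^a`, the maximal ideal on which the induced norm is order continuous:
`x ∈ G^a` iff every disjoint sequence in `[0, |x|]` is norm null. -/
def InOrderContPart {G : Type*} [NormedAddCommGroup G] [Lattice G] [IsOrderedAddMonoid G] [HasSolidNorm G] (x : G) : Prop :=
  ∀ y : ℕ → G, (∀ n, 0 ≤ y n ∧ y n ≤ |x|) → DisjointSeq y →
    Tendsto (fun n => ‖y n‖) atTop (𝓝 0)

/-!
Suppose a disjoint sequence `xₙ` with `|xₙ| ≤ |yₙ|`, `yₙ ∈ A`, had `‖xₙ‖ ≥ ε`. Take norming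
functionals of the `xₙ`, and replace their moduli by their components in the bands generated by
the `|xₙ|`; these components are pairwise disjoint. Re-signing each along `yₙ⁺` and `yₙ⁻` gives a
bounded disjoint sequence `gₙ` in `E'` with `gₙ(yₙ) ≥ ε`. As a dual, `E'` is Dedekind
σ-complete, so with its order continuous norm every disjoint sequence in `E'` is un-null, and
weak L-weak compactness of `A` forces `sup_{x ∈ A} |gₙ(x)| → 0`, a contradiction.
-/

open scoped NNReal

section LatticeOrderedGroup

variable {G : Type*} [Lattice G] [AddCommGroup G] [IsOrderedAddMonoid G]

lemma inf_add_le_inf_add_inf {a b c : G} (ha : 0 ≤ a) (hb : 0 ≤ b) (hc : 0 ≤ c) :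
    (a + b) ⊓ c ≤ a ⊓ c + b ⊓ c := by
  rw [add_inf]
  refine le_inf ?_ (inf_le_right.trans (le_add_of_nonneg_left (le_inf ha hc)))
  calc (a + b) ⊓ c ≤ (a + b) ⊓ (c + b) := inf_le_inf_left _ (le_add_of_nonneg_right hb)
    _ = a ⊓ c + b := (inf_add a c b).symm

lemma inf_nsmul_eq_zero {a b : G} (ha : 0 ≤ a) (hb : 0 ≤ b) (hab : a ⊓ b = 0) (k : ℕ) :
    a ⊓ k • b = 0 := by
  induction k with
  | zero => rw [zero_nsmul]; exact inf_eq_right.2 ha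
  | succ k ih =>
    refine le_antisymm ?_ (le_inf ha (nsmul_nonneg hb _))
    calc a ⊓ (k + 1) • b = (k • b + b) ⊓ a := by rw [inf_comm, succ_nsmul]
      _ ≤ k • b ⊓ a + b ⊓ a := inf_add_le_inf_add_inf (nsmul_nonneg hb k) hb ha
      _ = 0 := by rw [inf_comm _ a, inf_comm b, ih, hab, add_zero]

lemma sum_inf_eq_zero {ι : Type*} {s : Finset ι} {h : ι → G} {c : G} (hc : 0 ≤ c)
    (hpos : ∀ i ∈ s, 0 ≤ h i) (hd : ∀ i ∈ s, h i ⊓ c = 0) : (∑ i ∈ s, h i) ⊓ c = 0 := by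
  refine (Finset.sum_induction h (fun a => 0 ≤ a ∧ a ⊓ c = 0) ?_ ⟨le_rfl, inf_eq_left.2 hc⟩
    fun i hi => ⟨hpos i hi, hd i hi⟩).2
  rintro a b ⟨ha, hac⟩ ⟨hb, hbc⟩
  refine ⟨add_nonneg ha hb, le_antisymm ?_ (le_inf (add_nonneg ha hb) hc)⟩
  simpa [hac, hbc] using inf_add_le_inf_add_inf ha hb hc

lemma sum_range_le_of_pairwise_inf_eq_zero {h : ℕ → G} {u : G} (hpos : ∀ i, 0 ≤ h i)
    (hd : Pairwise fun i j => h i ⊓ h j = 0) (hu : ∀ i, h i ≤ u) (k : ℕ) :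
    ∑ i ∈ Finset.range k, h i ≤ u := by
  induction k with
  | zero => simpa using (hpos 0).trans (hu 0)
  | succ k ih =>
    have hdisj : (∑ i ∈ Finset.range k, h i) ⊓ h k = 0 :=
      sum_inf_eq_zero (hpos k) (fun i _ => hpos i) fun i hi => hd (Finset.mem_range.1 hi).ne
    rw [Finset.sum_range_succ, ← inf_add_sup, hdisj, zero_add]
    exact sup_le ih (hu k)

end LatticeOrderedGroup

section NormedLattice

variable {G : Type*} [NormedAddCommGroup G] [Lattice G] [IsOrderedAddMonoid G] [HasSolidNorm G]

lemma norm_posPart_le (x : G) : ‖x⁺‖ ≤ ‖x‖ :=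
  norm_le_norm_of_abs_le_abs <| by
    rw [abs_of_nonneg (posPart_nonneg x), ← posPart_add_negPart]
    exact le_add_of_nonneg_right (negPart_nonneg x)

lemma tendsto_norm_zero_of_pairwise_inf_eq_zero (hoc : OrderContNorm G)
    (hσ : DedekindSigmaComplete G) {h : ℕ → G} {u : G} (hpos : ∀ n, 0 ≤ h n)
    (hd : Pairwise fun n m => h n ⊓ h m = 0) (hu : ∀ n, h n ≤ u) :
    Tendsto (fun n => ‖h n‖) atTop (𝓝 0) := by
  set S : ℕ → G := fun k => ∑ i ∈ Finset.range k, h i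
  have hS : Monotone S := monotone_nat_of_le_succ fun k => by
    simpa [S, Finset.sum_range_succ] using hpos k
  obtain ⟨s, hs⟩ := hσ S hS ⟨u, sum_range_le_of_pairwise_inf_eq_zero hpos hd hu⟩
  have hSs : ∀ k, S k ≤ s := fun k => hs.1 (Set.mem_range_self k)
  have htail : IsGLB (Set.range fun k => s - S k) 0 := by
    refine ⟨?_, fun c hc => ?_⟩
    · rintro _ ⟨k, rfl⟩
      exact sub_nonneg.2 (hSs k)
    · have : s ≤ s - c := hs.2 (by rintro _ ⟨k, rfl⟩; exact le_sub_comm.1 (hc ⟨k, rfl⟩))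
      simpa using this
  refine squeeze_zero (fun _ => norm_nonneg _) (fun k => norm_le_norm_of_abs_le_abs ?_)
    (hoc ℕ _ (fun i j hij => sub_le_sub_left (hS hij) s) htail)
  rw [abs_of_nonneg (hpos k), abs_of_nonneg (sub_nonneg.2 (hSs k)), le_sub_iff_add_le']
  simpa [S, Finset.sum_range_succ] using hSs (k + 1)

lemma DisjointSeq.unNullSeq (hoc : OrderContNorm G) (hσ : DedekindSigmaComplete G)
    {g : ℕ → G} (hg : DisjointSeq g) : UnNullSeq g := fun u hu =>
  have hpos : ∀ n, 0 ≤ |g n| ⊓ u := fun _ => le_inf (abs_nonneg _) hu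
  tendsto_norm_zero_of_pairwise_inf_eq_zero hoc hσ hpos
    (fun n m hnm => le_antisymm ((inf_le_inf inf_le_left inf_le_left).trans (hg hnm).le)
      (le_inf (hpos n) (hpos m)))
    fun _ => inf_le_right

lemma lwcSet_of_disjointSeq_not_bounded_below {A : Set G} (hA : IsBounded A)
    (h : ∀ (x : ℕ → G) (ε : ℝ), 0 < ε → (∀ n, x n ∈ SolidHull A) → DisjointSeq x →
      ¬ ∀ n, ε ≤ ‖x n‖) :
    LWCSet A := by
  refine ⟨hA, fun x hxA hxd => ?_⟩
  by_contra hx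
  obtain ⟨s, hs, hfreq⟩ := not_tendsto_iff_exists_frequently_notMem.1 hx
  obtain ⟨ε, hε, hball⟩ := Metric.mem_nhds_iff.1 hs
  have hfreq' : ∃ᶠ n in atTop, ε ≤ ‖x n‖ := hfreq.mono fun n hn => by
    simpa using fun h => hn (hball h)
  obtain ⟨k, hk, hkε⟩ := extraction_of_frequently_atTop hfreq'
  exact h (x ∘ k) ε hε (fun n => hxA (k n)) (fun n m hnm => hxd (hk.injective.ne hnm)) hkε

end NormedLattice

lemma abs_apply_le_biSup {E : Type*} [NormedAddCommGroup E] [NormedSpace ℝ E] {A : Set E}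
    (hA : IsBounded A) (f : StrongDual ℝ E) {y : E} (hy : y ∈ A) :
    |f y| ≤ ⨆ x ∈ A, |f x| := by
  obtain ⟨R, hR⟩ := isBounded_iff_forall_norm_le.1 hA
  refine le_ciSup₂ (f := fun x (_ : x ∈ A) => |f x|) ⟨‖f‖ * R, ?_⟩ y hy
  rintro _ ⟨_, ⟨x, rfl⟩, ⟨hx, rfl⟩⟩
  calc |f x| = ‖f x‖ := (Real.norm_eq_abs _).symm
    _ ≤ ‖f‖ * R := f.le_opNorm_of_le (hR x hx)

section PositiveFunctional

variable {E : Type*} [NormedAddCommGroup E] [Lattice E] [IsOrderedAddMonoid E] [NormedSpace ℝ E]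

lemma PositiveOp.apply_mono {T : StrongDual ℝ E} (hT : PositiveOp T) {a b : E} (hab : a ≤ b) :
    T a ≤ T b := by
  simpa using hT (b - a) (sub_nonneg.2 hab)

/-- `S` only sees the band generated by `e`. -/
def IsCarriedBy (S : StrongDual ℝ E) (e : E) : Prop :=
  ∀ z, 0 ≤ z → Tendsto (fun K : ℕ => S (z ⊓ K • e)) atTop (𝓝 (S z))

lemma IsCarriedBy.apply_eq_zero {S : StrongDual ℝ E} {e w : E} (hS : IsCarriedBy S e)
    (he : 0 ≤ e) (hw : 0 ≤ w) (hwe : w ⊓ e = 0) : S w = 0 := by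
  refine tendsto_nhds_unique (hS w hw) ?_
  simp [inf_nsmul_eq_zero hw he hwe]

/-- For positive `T` and `z ≥ 0`, the value at `z` of the component of `T` in the band
generated by `e`. -/
noncomputable def bandPart (T : StrongDual ℝ E) (e z : E) : ℝ :=
  ⨆ K : ℕ, T (z ⊓ K • e)

section BandPart

variable {T : StrongDual ℝ E} {e : E}

lemma apply_inf_nsmul_le_bandPart (hT : PositiveOp T) (z : E) (K : ℕ) :
    T (z ⊓ K • e) ≤ bandPart T e z :=
  le_ciSup (f := fun K : ℕ => T (z ⊓ K • e))
    ⟨T z, by rintro _ ⟨K, rfl⟩; exact hT.apply_mono inf_le_left⟩ K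

lemma bandPart_le (hT : PositiveOp T) (z : E) : bandPart T e z ≤ T z :=
  ciSup_le fun _ => hT.apply_mono inf_le_left

lemma tendsto_bandPart (hT : PositiveOp T) (he : 0 ≤ e) (z : E) :
    Tendsto (fun K : ℕ => T (z ⊓ K • e)) atTop (𝓝 (bandPart T e z)) :=
  tendsto_atTop_ciSup
    (fun _ _ hij => hT.apply_mono (inf_le_inf_left _ (nsmul_le_nsmul_left he hij)))
    ⟨T z, by rintro _ ⟨K, rfl⟩; exact hT.apply_mono inf_le_left⟩

lemma bandPart_nonneg (hT : PositiveOp T) {z : E} (hz : 0 ≤ z) : 0 ≤ bandPart T e z := by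
  simpa [inf_eq_right.2 hz] using apply_inf_nsmul_le_bandPart hT z 0

lemma bandPart_self (hT : PositiveOp T) : bandPart T e e = T e :=
  le_antisymm (bandPart_le hT e) (by simpa using apply_inf_nsmul_le_bandPart (e := e) hT e 1)

lemma bandPart_mono (hT : PositiveOp T) {a b : E} (hab : a ≤ b) :
    bandPart T e a ≤ bandPart T e b :=
  ciSup_le fun K => (hT.apply_mono (inf_le_inf_right _ hab)).trans
    (apply_inf_nsmul_le_bandPart hT b K)

/-- Subadditivity uses `(y + z) ⊓ K e ≤ y ⊓ K e + z ⊓ K e`, superadditivity uses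
`y ⊓ K e + z ⊓ K e ≤ (y + z) ⊓ 2K e`. -/
lemma bandPart_add (hT : PositiveOp T) (he : 0 ≤ e) {y z : E} (hy : 0 ≤ y) (hz : 0 ≤ z) :
    bandPart T e (y + z) = bandPart T e y + bandPart T e z := by
  have hlim := (tendsto_bandPart hT he y).add (tendsto_bandPart hT he z)
  refine le_antisymm (le_of_tendsto_of_tendsto' (tendsto_bandPart hT he (y + z)) hlim fun K => ?_)
    (le_of_tendsto' hlim fun K => ?_)
  · rw [← map_add]
    exact hT.apply_mono (inf_add_le_inf_add_inf hy hz (nsmul_nonneg he K))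
  · rw [← map_add]
    refine (hT.apply_mono (le_inf (add_le_add inf_le_left inf_le_left) ?_)).trans
      (apply_inf_nsmul_le_bandPart hT (y + z) (2 * K))
    rw [two_mul, add_nsmul]
    exact add_le_add inf_le_right inf_le_right

end BandPart

variable [HasSolidNorm E]

/-- The extension is `x ↦ p x⁺ - p x⁻`. -/
lemma exists_eq_of_additive_on_nonneg (p : E → ℝ) (C : ℝ≥0)
    (hadd : ∀ y z, 0 ≤ y → 0 ≤ z → p (y + z) = p y + p z)
    (hpos : ∀ z, 0 ≤ z → 0 ≤ p z) (hle : ∀ z, 0 ≤ z → p z ≤ C * ‖z‖) :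
    ∃ T : StrongDual ℝ E, ∀ z, 0 ≤ z → T z = p z := by
  have hp0 : p 0 = 0 := by simpa using hadd 0 0 le_rfl le_rfl
  have hmap_add : ∀ x y : E, p (x + y)⁺ - p (x + y)⁻ = (p x⁺ - p x⁻) + (p y⁺ - p y⁻) := by
    intro x y
    have hparts : (x + y)⁺ + (x⁻ + y⁻) = (x⁺ + y⁺) + (x + y)⁻ := by
      refine sub_eq_sub_iff_add_eq_add.1 ?_
      rw [posPart_sub_negPart, add_sub_add_comm, posPart_sub_negPart, posPart_sub_negPart]
    have h := congrArg p hparts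
    rw [hadd _ _ (posPart_nonneg _) (add_nonneg (negPart_nonneg _) (negPart_nonneg _)),
      hadd _ _ (add_nonneg (posPart_nonneg _) (posPart_nonneg _)) (negPart_nonneg _),
      hadd _ _ (negPart_nonneg _) (negPart_nonneg _),
      hadd _ _ (posPart_nonneg _) (posPart_nonneg _)] at h
    linarith
  let Q : E →+ ℝ := AddMonoidHom.mk' (fun x => p x⁺ - p x⁻) hmap_add
  have hbound : ∀ x, ‖Q x‖ ≤ C * ‖x‖ := fun x => by
    have hneg : ‖x⁻‖ ≤ ‖x‖ := by simpa using norm_posPart_le (-x)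
    exact abs_sub_le_of_nonneg_of_le (hpos _ (posPart_nonneg x))
      ((hle _ (posPart_nonneg x)).trans (mul_le_mul_of_nonneg_left (norm_posPart_le x) C.2))
      (hpos _ (negPart_nonneg x))
      ((hle _ (negPart_nonneg x)).trans (mul_le_mul_of_nonneg_left hneg C.2))
  refine ⟨Q.toRealLinearMap (AddMonoidHomClass.continuous_of_bound Q C hbound), fun z hz => ?_⟩
  change p z⁺ - p z⁻ = p z
  rw [posPart_eq_self.2 hz, negPart_eq_zero.2 hz, hp0, sub_zero]

lemma exists_isCarriedBy_le {T : StrongDual ℝ E} {e : E} (hT : PositiveOp T) (he : 0 ≤ e) :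
    ∃ S : StrongDual ℝ E, PositiveOp S ∧ (∀ z, 0 ≤ z → S z ≤ T z) ∧ S e = T e ∧
      IsCarriedBy S e := by
  obtain ⟨S, hS⟩ := exists_eq_of_additive_on_nonneg (bandPart T e) ‖T‖₊
    (fun y z hy hz => bandPart_add hT he hy hz) (fun z hz => bandPart_nonneg hT hz)
    fun z _ => (bandPart_le hT z).trans ((le_abs_self _).trans (T.le_opNorm z))
  have hinf : ∀ z (K : ℕ), 0 ≤ z → 0 ≤ z ⊓ K • e := fun z K hz => le_inf hz (nsmul_nonneg he K)
  refine ⟨S, fun z hz => hS z hz ▸ bandPart_nonneg hT hz, fun z hz => hS z hz ▸ bandPart_le hT z,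
    (hS e he).trans (bandPart_self hT), fun z hz => ?_⟩
  simp only [hS _ (hinf _ _ hz), hS z hz]
  refine tendsto_of_tendsto_of_tendsto_of_le_of_le (tendsto_bandPart hT he z) tendsto_const_nhds
    (fun K => ?_) fun K => bandPart_mono hT inf_le_left
  simpa [inf_assoc] using apply_inf_nsmul_le_bandPart (e := e) hT (z ⊓ K • e) K

end PositiveFunctional

namespace DualPairing

variable {E E' : Type*} [NormedAddCommGroup E] [Lattice E] [IsOrderedAddMonoid E] [HasSolidNorm E]
  [NormedSpace ℝ E] [NormedAddCommGroup E'] [Lattice E'] [IsOrderedAddMonoid E'] [HasSolidNorm E']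
  [NormedSpace ℝ E']

lemma positiveOp_toDual_iff (P : DualPairing E E') {f : E'} : PositiveOp (P.toDual f) ↔ 0 ≤ f :=
  (P.pos_iff f).symm

lemma le_iff (P : DualPairing E E') {f g : E'} :
    f ≤ g ↔ ∀ z : E, 0 ≤ z → P.toDual f z ≤ P.toDual g z := by
  rw [← sub_nonneg, P.pos_iff]
  simp

lemma nonneg_symm_iff (P : DualPairing E E') {S : StrongDual ℝ E} :
    0 ≤ P.toDual.symm S ↔ PositiveOp S := by
  rw [← P.positiveOp_toDual_iff]
  simp

lemma symm_le_iff (P : DualPairing E E') {S : StrongDual ℝ E} {f : E'} :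
    P.toDual.symm S ≤ f ↔ ∀ z : E, 0 ≤ z → S z ≤ P.toDual f z := by
  simp [P.le_iff]

/-- The supremum of `S k` is `S 0 + q`, where `q z = lim (S k - S 0) z` for `z ≥ 0`. -/
lemma dedekindSigmaComplete (P : DualPairing E E') : DedekindSigmaComplete E' := by
  rintro S hS ⟨u, hu⟩
  let q : E → ℝ := fun z => ⨆ k, P.toDual (S k - S 0) z
  have hmono : ∀ z, 0 ≤ z → Monotone fun k => P.toDual (S k - S 0) z := fun z hz i j hij =>
    P.le_iff.1 (sub_le_sub_right (hS hij) _) z hz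
  have hbdd : ∀ z, 0 ≤ z → ∀ k, P.toDual (S k - S 0) z ≤ P.toDual (u - S 0) z := fun z hz k =>
    P.le_iff.1 (sub_le_sub_right (hu k) _) z hz
  have htend : ∀ z, 0 ≤ z → Tendsto (fun k => P.toDual (S k - S 0) z) atTop (𝓝 (q z)) :=
    fun z hz => tendsto_atTop_ciSup (hmono z hz) ⟨_, Set.forall_mem_range.2 (hbdd z hz)⟩
  obtain ⟨T, hT⟩ := exists_eq_of_additive_on_nonneg q ‖u - S 0‖₊
    (fun y z hy hz => tendsto_nhds_unique (htend _ (add_nonneg hy hz))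
      (by simpa only [map_add] using (htend y hy).add (htend z hz)))
    (fun z hz => ge_of_tendsto' (htend z hz) fun k => by simpa using hmono z hz k.zero_le)
    fun z hz => le_of_tendsto' (htend z hz) fun k => (hbdd z hz k).trans <| by
      rw [coe_nnnorm, ← P.toDual.norm_map]
      exact (le_abs_self _).trans ((P.toDual (u - S 0)).le_opNorm z)
  have hsup : ∀ z, 0 ≤ z → P.toDual (P.toDual.symm T + S 0) z = q z + P.toDual (S 0) z :=
    fun z hz => by simp [hT z hz]
  refine ⟨P.toDual.symm T + S 0, ?_, fun v hv => P.le_iff.2 fun z hz => ?_⟩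
  · rintro _ ⟨k, rfl⟩
    refine P.le_iff.2 fun z hz => ?_
    have h := (hmono z hz).ge_of_tendsto (htend z hz) k
    rw [map_sub, sub_apply] at h
    linarith [hsup z hz]
  · have h := le_of_tendsto' (htend z hz) fun k =>
      P.le_iff.1 (sub_le_sub_right (hv (Set.mem_range_self k)) (S 0)) z hz
    rw [map_sub, sub_apply] at h
    linarith [hsup z hz]

lemma abs_apply_le (P : DualPairing E E') (f : E') (z : E) : |P.toDual f z| ≤ P.toDual |f| |z| := by
  have hpos : ∀ w : E, 0 ≤ w → |P.toDual f w| ≤ P.toDual |f| w := fun w hw =>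
    abs_le.2 ⟨by simpa using P.le_iff.1 (neg_le.1 (neg_le_abs f)) w hw,
      P.le_iff.1 (le_abs_self f) w hw⟩
  calc |P.toDual f z| = |P.toDual f z⁺ - P.toDual f z⁻| := by rw [← map_sub, posPart_sub_negPart]
    _ ≤ |P.toDual f z⁺| + |P.toDual f z⁻| := abs_sub _ _
    _ ≤ P.toDual |f| z⁺ + P.toDual |f| z⁻ :=
      add_le_add (hpos _ (posPart_nonneg z)) (hpos _ (negPart_nonneg z))
    _ = P.toDual |f| |z| := by rw [← map_add, posPart_add_negPart]

lemma exists_norming_isCarriedBy (P : DualPairing E E') (x : E) :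
    ∃ φ : E', 0 ≤ φ ∧ ‖φ‖ ≤ 1 ∧ IsCarriedBy (P.toDual φ) |x| ∧ ‖x‖ ≤ P.toDual φ |x| := by
  obtain ⟨F, hF, hFx⟩ := exists_dual_vector'' ℝ x
  obtain ⟨S, hSpos, hSle, hSx, hS⟩ :=
    exists_isCarriedBy_le (P.positiveOp_toDual_iff.2 (abs_nonneg _)) (abs_nonneg x)
  have hSΦ : P.toDual.symm S ≤ |P.toDual.symm F| := P.symm_le_iff.2 hSle
  refine ⟨P.toDual.symm S, P.nonneg_symm_iff.2 hSpos, ?_, by simpa using hS, ?_⟩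
  · calc ‖P.toDual.symm S‖ ≤ ‖|P.toDual.symm F|‖ := norm_le_norm_of_abs_le_abs (by
          rwa [abs_of_nonneg (P.nonneg_symm_iff.2 hSpos), abs_abs])
      _ ≤ 1 := by rw [norm_abs_eq_norm, LinearIsometryEquiv.norm_map]; exact hF
  · calc ‖x‖ = P.toDual (P.toDual.symm F) x := by simp [hFx]
      _ ≤ |P.toDual (P.toDual.symm F) x| := le_abs_self _
      _ ≤ P.toDual |P.toDual.symm F| |x| := P.abs_apply_le _ x
      _ = P.toDual (P.toDual.symm S) |x| := by rw [LinearIsometryEquiv.apply_symm_apply, hSx]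

/-- With `ψ`, `χ` the parts of `φ` carried by `y⁺` and `y⁻`, take `g = ψ - χ`. -/
lemma exists_abs_le_two_nsmul_apply_eq (P : DualPairing E E') {φ : E'} (hφ : 0 ≤ φ) (y : E) :
    ∃ g : E', |g| ≤ 2 • φ ∧ P.toDual g y = P.toDual φ |y| := by
  have hφ' : PositiveOp (P.toDual φ) := P.positiveOp_toDual_iff.2 hφ
  obtain ⟨ψ, hψpos, hψle, hψy, hψ⟩ := exists_isCarriedBy_le hφ' (posPart_nonneg y)
  obtain ⟨χ, hχpos, hχle, hχy, hχ⟩ := exists_isCarriedBy_le hφ' (negPart_nonneg y)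
  have hψ0 : ψ y⁻ = 0 := hψ.apply_eq_zero (posPart_nonneg y) (negPart_nonneg y)
    (by rw [inf_comm]; exact posPart_inf_negPart_eq_zero y)
  have hχ0 : χ y⁺ = 0 := hχ.apply_eq_zero (negPart_nonneg y) (posPart_nonneg y)
    (posPart_inf_negPart_eq_zero y)
  refine ⟨P.toDual.symm ψ - P.toDual.symm χ, ?_, ?_⟩
  · calc |P.toDual.symm ψ - P.toDual.symm χ| = |P.toDual.symm ψ + -P.toDual.symm χ| := by
          rw [sub_eq_add_neg]
      _ ≤ |P.toDual.symm ψ| + |-P.toDual.symm χ| := abs_add_le _ _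
      _ = P.toDual.symm ψ + P.toDual.symm χ := by
          rw [abs_neg, abs_of_nonneg (P.nonneg_symm_iff.2 hψpos),
            abs_of_nonneg (P.nonneg_symm_iff.2 hχpos)]
      _ ≤ φ + φ := add_le_add (P.symm_le_iff.2 hψle) (P.symm_le_iff.2 hχle)
      _ = 2 • φ := (two_nsmul φ).symm
  · have hsplit : ∀ S : StrongDual ℝ E, S y = S y⁺ - S y⁻ := fun S => by
      rw [← map_sub, posPart_sub_negPart]
    simp only [map_sub, sub_apply, LinearIsometryEquiv.apply_symm_apply]
    rw [hsplit ψ, hsplit χ, hψ0, hχ0, hψy, hχy, ← posPart_add_negPart y, map_add]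
    ring

lemma inf_eq_zero_of_isCarriedBy (P : DualPairing E E') {φ φ' : E'} (hφ : 0 ≤ φ) (hφ' : 0 ≤ φ')
    {e e' : E} (he : 0 ≤ e) (he' : 0 ≤ e') (hee' : e ⊓ e' = 0) (hc : IsCarriedBy (P.toDual φ) e)
    (hc' : IsCarriedBy (P.toDual φ') e') : φ ⊓ φ' = 0 := by
  refine le_antisymm (P.le_iff.2 fun z hz => ?_) (le_inf hφ hφ')
  have hinf : ∀ K : ℕ, 0 ≤ z ⊓ K • e' := fun K => le_inf hz (nsmul_nonneg he' K)
  have hzero : ∀ K : ℕ, P.toDual φ (z ⊓ K • e') = 0 := fun K =>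
    hc.apply_eq_zero he (hinf K) <| le_antisymm
      ((inf_le_inf_right e inf_le_right).trans (by rw [inf_comm, inf_nsmul_eq_zero he he' hee']))
      (le_inf (hinf K) he)
  -- Split `z` at `z ⊓ K e'`: `φ` vanishes there, and `φ'` of the rest tends to `0`.
  have hbound : ∀ K : ℕ, P.toDual (φ ⊓ φ') z ≤ P.toDual φ' z - P.toDual φ' (z ⊓ K • e') := by
    intro K
    have h1 := P.le_iff.1 (inf_le_left : φ ⊓ φ' ≤ φ) _ (hinf K)
    have h2 := P.le_iff.1 (inf_le_right : φ ⊓ φ' ≤ φ') _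
      (sub_nonneg.2 (inf_le_left : z ⊓ K • e' ≤ z))
    simp only [map_sub] at h2
    rw [hzero K] at h1
    linarith
  simpa using ge_of_tendsto' ((hc' z hz).const_sub (P.toDual φ' z)) hbound

lemma exists_disjointSeq_norm_le_apply (P : DualPairing E E') {x y : ℕ → E} (hx : DisjointSeq x)
    (hxy : ∀ n, |x n| ≤ |y n|) :
    ∃ g : ℕ → E', (∀ n, ‖g n‖ ≤ 2) ∧ DisjointSeq g ∧ ∀ n, ‖x n‖ ≤ P.toDual (g n) (y n) := by
  choose φ hφ hφ1 hφc hφx using fun n => P.exists_norming_isCarriedBy (x n)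
  choose g hg hgy using fun n => P.exists_abs_le_two_nsmul_apply_eq (hφ n) (y n)
  refine ⟨g, fun n => ?_, fun n m hnm => ?_, fun n => ?_⟩
  · calc ‖g n‖ ≤ ‖2 • φ n‖ :=
          norm_le_norm_of_abs_le_abs (by rw [abs_of_nonneg (nsmul_nonneg (hφ n) 2)]; exact hg n)
      _ ≤ 2 * ‖φ n‖ := by simpa using norm_nsmul_le (n := 2) (a := φ n)
      _ ≤ 2 := by linarith [hφ1 n]
  · have hφd : φ m ⊓ φ n = 0 := P.inf_eq_zero_of_isCarriedBy (hφ m) (hφ n) (abs_nonneg _)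
      (abs_nonneg _) (hx hnm.symm) (hφc m) (hφc n)
    have h2φ : (2 • φ n) ⊓ (2 • φ m) = 0 := inf_nsmul_eq_zero (nsmul_nonneg (hφ n) 2) (hφ m)
      (by rw [inf_comm]; exact inf_nsmul_eq_zero (hφ m) (hφ n) hφd 2) 2
    exact le_antisymm ((inf_le_inf (hg n) (hg m)).trans h2φ.le)
      (le_inf (abs_nonneg _) (abs_nonneg _))
  · calc ‖x n‖ ≤ P.toDual (φ n) |x n| := hφx n
      _ ≤ P.toDual (φ n) |y n| := (P.positiveOp_toDual_iff.2 (hφ n)).apply_mono (hxy n)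
      _ = P.toDual (g n) (y n) := (hgy n).symm

end DualPairing

theorem stmt7_general {E : Type*} [NormedAddCommGroup E] [Lattice E] [IsOrderedAddMonoid E] [HasSolidNorm E] [NormedSpace ℝ E] {E' : Type*} [NormedAddCommGroup E'] [Lattice E'] [IsOrderedAddMonoid E'] [HasSolidNorm E'] [NormedSpace ℝ E']
    (P : DualPairing E E') (hoc : OrderContNorm E')
    (A : Set E) (hA : WeakLWCSet P A) : LWCSet A := by
  refine lwcSet_of_disjointSeq_not_bounded_below hA.1 fun x ε hε hxA hxd hxε => ?_
  choose y hyA hxy using hxA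
  obtain ⟨g, hg, hgd, hgy⟩ := P.exists_disjointSeq_norm_le_apply hxd hxy
  have hsup := hA.2 g ⟨2, hg⟩ (hgd.unNullSeq hoc P.dedekindSigmaComplete)
  obtain ⟨n, hn⟩ := (hsup.eventually (gt_mem_nhds hε)).exists
  exact hn.not_ge <| (hxε n).trans <| (hgy n).trans <|
    (le_abs_self _).trans (abs_apply_le_biSup hA.1 _ (hyA n))

/-- If the dual `E'` has order continuous norm, then every weak L-weakly compact subset of `E`
is L-weakly compact. -/
theorem stmt7 {E : Type*} [NormedAddCommGroup E] [Lattice E] [IsOrderedAddMonoid E] [HasSolidNorm E] [NormedSpace ℝ E] [CompleteSpace E] {E' : Type*} [NormedAddCommGroup E'] [Lattice E'] [IsOrderedAddMonoid E'] [HasSolidNorm E'] [NormedSpace ℝ E'] [CompleteSpace E']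
    (P : DualPairing E E') (hoc : OrderContNorm E')
    (A : Set E) (hA : WeakLWCSet P A) : LWCSet A :=
  stmt7_general P hoc A hA
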